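/- Define matrices C_1, C_3, C_4 as: C_1^T = (𝟙^T α)/(𝟙^T α 𝟙) with α = W^{-1} M A, C_3 = −α(I_n − 𝟙 C_1^T), C_4 = α 𝟙 C_2 − W^{-1} V with C_2 = (D* + 𝟙^T W^{-1} V)/(𝟙^T α 𝟙). Then for any T ∈ ℝ^n, setting D = C_3 T + C_4 and T_sup = C_1^T T + C_2, the pair (D, T_sup) satisfies both 𝟙^T D = D* and 0 = A(T − T_sup 𝟙) + M^{-1}(V + W D). (Converse to the uniqueness lemmas.) -/

import Mathlib

/-!
Both constraints follow once `D` is rewritten as `α (T_sup 𝟙 - T) - W⁻¹ V`, with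
`α = W⁻¹ M A`: multiplying by `W` and then `M⁻¹` turns the steady-state equation into
`A (T - T_sup 𝟙) + A (T_sup 𝟙 - T) = 0`, and summing the entries gives
`s T_sup - 𝟙ᵀα T - 𝟙ᵀW⁻¹V`, which `C₁` and `C₂` were chosen to make equal to `D*`.
-/

open Matrix

section

variable {ι R : Type*} [Fintype ι]

theorem isUnit_det_diagonal_of_ne_zero [DecidableEq ι] [Field R] {v : ι → R}
    (hv : ∀ i, v i ≠ 0) :
    IsUnit (diagonal v).det :=
  (isUnit_iff_isUnit_det _).mp <| isUnit_diagonal.mpr <| Pi.isUnit_iff.mpr fun i => (hv i).isUnit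

theorem neg_mul_one_sub_vecMulVec_mulVec [DecidableEq ι] [CommRing R] (α : Matrix ι ι R)
    (u c x : ι → R) :
    (-(α * (1 - vecMulVec u c))) *ᵥ x = α *ᵥ ((c ⬝ᵥ x) • u - x) := by
  rw [neg_mulVec, ← mulVec_mulVec, sub_mulVec, one_mulVec, vecMulVec_mulVec, op_smul_eq_smul,
    ← mulVec_neg, neg_sub]

/-- The `T`-dependence cancels because `s • c = uᵀ α`. -/
theorem dotProduct_mulVec_smul_sub_sub_eq [Field R] (α : Matrix ι ι R) (u b T : ι → R) (d : R)
    {s : R} (hs : s = vecMul u α ⬝ᵥ u) (hs0 : s ≠ 0)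
    {c : ι → R} (hc : c = s⁻¹ • vecMul u α) {t : R} (ht : t = c ⬝ᵥ T + (d + u ⬝ᵥ b) / s) :
    u ⬝ᵥ (α *ᵥ (t • u - T) - b) = d := by
  have hcT : vecMul u α ⬝ᵥ T = s * (c ⬝ᵥ T) := by
    rw [hc, smul_dotProduct, smul_eq_mul, ← mul_assoc, mul_inv_cancel₀ hs0, one_mul]
  rw [dotProduct_sub, dotProduct_mulVec, dotProduct_sub, dotProduct_smul, ← hs, hcT, ht,
    smul_eq_mul]
  field_simp
  ring

theorem mulVec_add_inv_mulVec_eq_zero [DecidableEq ι] [CommRing R] {W M : Matrix ι ι R}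
    (hW : IsUnit W.det) (hM : IsUnit M.det) (A : Matrix ι ι R) (V y : ι → R) :
    A *ᵥ (-y) + M⁻¹ *ᵥ (V + W *ᵥ ((W⁻¹ * M * A) *ᵥ y - W⁻¹ *ᵥ V)) = 0 := by
  rw [mulVec_sub, mulVec_mulVec, mulVec_mulVec, ← Matrix.mul_assoc, ← Matrix.mul_assoc,
    mul_nonsing_inv W hW, Matrix.one_mul, one_mulVec, add_sub_cancel, mulVec_mulVec,
    ← Matrix.mul_assoc, nonsing_inv_mul M hM, Matrix.one_mul, mulVec_neg, neg_add_cancel]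

end

theorem stmt17_general (n : ℕ) (w m : Fin n → ℝ) (cp : ℝ) (A : Matrix (Fin n) (Fin n) ℝ)
    (V : Fin n → ℝ) (Dstar : ℝ)
    (hw : ∀ i, 0 < w i) (hm : ∀ i, 0 < m i) (hcp : 0 < cp)
    (ones : Fin n → ℝ)
    (W M : Matrix (Fin n) (Fin n) ℝ)
    (hW : W = Matrix.diagonal w) (hM : M = Matrix.diagonal (fun i => cp * m i))
    (s : ℝ) (hs : s = Matrix.vecMul ones (W⁻¹ * M * A) ⬝ᵥ ones) (hs0 : s ≠ 0)
    (C1 : Fin n → ℝ) (hC1 : C1 = s⁻¹ • Matrix.vecMul ones (W⁻¹ * M * A))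
    (C2 : ℝ) (hC2 : C2 = (Dstar + ones ⬝ᵥ (W⁻¹).mulVec V) / s)
    (C3 : Matrix (Fin n) (Fin n) ℝ)
    (hC3 : C3 = -(W⁻¹ * M * A) * (1 - Matrix.vecMulVec ones C1))
    (C4 : Fin n → ℝ)
    (hC4 : C4 = C2 • (W⁻¹ * M * A).mulVec ones - (W⁻¹).mulVec V)
    (T : Fin n → ℝ)
    (D : Fin n → ℝ) (hD : D = C3.mulVec T + C4)
    (Tsup : ℝ) (hTsup : Tsup = C1 ⬝ᵥ T + C2) :
    ones ⬝ᵥ D = Dstar ∧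
    0 = A.mulVec (T - Tsup • ones) + (M⁻¹).mulVec (V + W.mulVec D) := by
  have hWdet : IsUnit W.det := hW ▸ isUnit_det_diagonal_of_ne_zero fun i => (hw i).ne'
  have hMdet : IsUnit M.det :=
    hM ▸ isUnit_det_diagonal_of_ne_zero fun i => (mul_pos hcp (hm i)).ne'
  have hDform : D = (W⁻¹ * M * A) *ᵥ (Tsup • ones - T) - W⁻¹ *ᵥ V := by
    rw [hD, hC3, hC4, Matrix.neg_mul, neg_mul_one_sub_vecMulVec_mulVec, hTsup, add_smul,
      add_sub_right_comm, mulVec_add, mulVec_sub, mulVec_smul, mulVec_smul]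
    abel
  refine ⟨hDform ▸
    dotProduct_mulVec_smul_sub_sub_eq _ ones _ T Dstar hs hs0 hC1 (hC2 ▸ hTsup), ?_⟩
  rw [hDform, ← mulVec_add_inv_mulVec_eq_zero hWdet hMdet A V (Tsup • ones - T), neg_sub]

/-- converse to the uniqueness lemmas: For any temperature
distribution `T`, setting `D = C₃ T + C₄` and `T_sup = C₁ᵀ T + C₂` satisfies
both the total-workload constraint and the steady-state constraint. -/
theorem stmt17 (n : ℕ) (w m : Fin n → ℝ) (cp : ℝ) (A : Matrix (Fin n) (Fin n) ℝ)
    (V : Fin n → ℝ) (Dstar : ℝ)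
    (hw : ∀ i, 0 < w i) (hm : ∀ i, 0 < m i) (hcp : 0 < cp)
    (hAunit : IsUnit A)
    (ones : Fin n → ℝ) (hones : ones = fun _ => 1)
    (W M : Matrix (Fin n) (Fin n) ℝ)
    (hW : W = Matrix.diagonal w) (hM : M = Matrix.diagonal (fun i => cp * m i))
    (s : ℝ) (hs : s = Matrix.vecMul ones (W⁻¹ * M * A) ⬝ᵥ ones) (hs0 : s ≠ 0)
    (C1 : Fin n → ℝ) (hC1 : C1 = s⁻¹ • Matrix.vecMul ones (W⁻¹ * M * A))
    (C2 : ℝ) (hC2 : C2 = (Dstar + ones ⬝ᵥ (W⁻¹).mulVec V) / s)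
    (C3 : Matrix (Fin n) (Fin n) ℝ)
    (hC3 : C3 = -(W⁻¹ * M * A) * (1 - Matrix.vecMulVec ones C1))
    (C4 : Fin n → ℝ)
    (hC4 : C4 = C2 • (W⁻¹ * M * A).mulVec ones - (W⁻¹).mulVec V)
    (T : Fin n → ℝ)
    (D : Fin n → ℝ) (hD : D = C3.mulVec T + C4)
    (Tsup : ℝ) (hTsup : Tsup = C1 ⬝ᵥ T + C2) :
    ones ⬝ᵥ D = Dstar ∧
    0 = A.mulVec (T - Tsup • ones) + (M⁻¹).mulVec (V + W.mulVec D) :=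
  stmt17_general n w m cp A V Dstar hw hm hcp ones W M hW hM s hs hs0 C1 hC1 C2 hC2 C3 hC3 C4 hC4 T
    D hD Tsup hTsup
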